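/- With the setup of the previous lemma (estimates satisfying $|\hat{r}(\pi) - V_\pi| \le \kappa + \frac{1}{16}\hat{\Delta}^{prev}_\pi$ for all $\pi$, $\hat{r}_* = \max_\pi\{\hat{r}(\pi) - \frac{1}{16}\hat{\Delta}^{prev}_\pi\}$, $\mathring{V} = \max_\pi V_\pi$, $\Delta_\pi = \mathring{V} - V_\pi$), and additionally assuming $\hat{\Delta}^{prev}_\pi \le 2(\Delta_\pi + \epsilon_{prev} + \rho)$ for all $\pi$ where $\epsilon_{prev}, \rho \ge 0$, the new gap estimate $\hat{\Delta}_\pi := \max\{\epsilon, \hat{r}_* - \hat{r}(\pi)\}$ (with $\epsilon = \epsilon_{prev}/2$) satisfies the lower bound $\hat{\Delta}_\pi \ge \frac{1}{4}\Delta_\pi - 3\rho' - \frac{3}{8}\epsilon_{prev}$, where $\rho' \ge \rho + \kappa$, provided $\hat{\Delta}_\pi \ge \frac{1}{2}(\hat{r}_* - \hat{r}(\pi))$. -/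
import Mathlib


open Finset

/-- Gap-estimation lower bound (abstraction of Lemma 7): the new gap estimate
`Δ̂_π = max{ε, r̂* - r̂(π)}` with `ε = ε_prev/2` satisfies
`Δ̂_π ≥ Δ_π/4 - 3ρ' - (3/8)ε_prev` whenever `Δ̂_π ≥ (r̂* - r̂(π))/2`. -/
theorem stmt_8 {P : Type*} [Fintype P] [Nonempty P]
    (rhat V Δprev : P → ℝ) (κ εprev ρ ρ' : ℝ)
    (hκ : 0 ≤ κ) (hεprev : 0 ≤ εprev) (hρ : 0 ≤ ρ) (hρ' : ρ + κ ≤ ρ')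
    (hΔprevnn : ∀ π, 0 ≤ Δprev π)
    (hest : ∀ π, |rhat π - V π| ≤ κ + Δprev π / 16)
    (Vring : ℝ) (hVring : Vring = ⨆ π, V π)
    (Δ : P → ℝ) (hΔ : ∀ π, Δ π = Vring - V π)
    (hprev : ∀ π, Δprev π ≤ 2 * (Δ π + εprev + ρ))
    (rstar : ℝ) (hrstar : rstar = ⨆ π, (rhat π - Δprev π / 16))
    (Δhat : P → ℝ) (hΔhat : ∀ π, Δhat π = max (εprev / 2) (rstar - rhat π))
    (π : P) (hhalf : (rstar - rhat π) / 2 ≤ Δhat π) :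
    Δ π / 4 - 3 * ρ' - 3 * εprev / 8 ≤ Δhat π := by
  obtain ⟨π0, hπ0⟩ := Finite.exists_max V
  have hball : V π ≤ Vring := by
    rw [hVring]; exact le_ciSup (Set.Finite.bddAbove (Set.finite_range V)) π
  have h1 : Vring ≤ V π0 := by
    rw [hVring]; exact ciSup_le hπ0
  have h2 : rhat π0 - Δprev π0 / 16 ≤ rstar := by
    rw [hrstar]
    exact le_ciSup (Set.Finite.bddAbove (Set.finite_range (fun p => rhat p - Δprev p / 16))) π0
  have e1 := abs_le.mp (hest π0)
  have e2 := abs_le.mp (hest π)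
  have hp0 := hprev π0
  have hp := hprev π
  have hd0 := hΔ π0
  have hd := hΔ π
  linarith [e1.1, e1.2, e2.1, e2.2]
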